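/- arXiv:1806.00672 — 2 statements merged into one kernel-verified Lean document; each statement's English description precedes it below -/
import Mathlib

section
/- The natural partition cost function c_S vanishes on the diagonal and satisfies the triangle inequality: c_S(P, P) = 0 and c_S(P, R) ≤ c_S(P, Q) + c_S(Q, R) for all partitions P, Q, R of S with at most l blocks, hence c_S is a pseudometric on partitions; moreover c_S(P, Q) = 0 implies P = Q. -/
/-!
The number of points on which two labelings disagree is their Hamming distance. Two labelings of the same
partition differ by a permutation of the labels, and relabeling both sides by a permutation does
not change their Hamming distance. So given optimal labelings `(φ, ψ)` for `(P, Q)` and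
`(ψ', χ)` for `(Q, R)`, relabel `χ` by the permutation carrying `ψ'` to `ψ`; the Hamming triangle
inequality through `ψ` then bounds `c_S(P, R)`. The infima are attained since the cost takes
only the finitely many values `k / |S|`, so `c_S(P, Q) = 0` yields labelings of `P` and `Q` that
agree everywhere.
-/

open Function

theorem Setoid.exists_perm_comp_eq_of_ker_eq {S L : Type*} [Finite S] {ψ ψ' : S → L}
    (h : Setoid.ker ψ' = Setoid.ker ψ) : ∃ π : Equiv.Perm L, π ∘ ψ' = ψ := by
  have hker : ∀ x y, ψ' x = ψ' y ↔ ψ x = ψ y := Setoid.ext_iff.mp h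
  have hfactor : ψ.FactorsThrough ψ' := fun x y => (hker x y).mp
  let f : Set.range ψ' ↪ L := ⟨fun a => extend ψ' ψ id a, by
    rintro ⟨_, x, rfl⟩ ⟨_, y, rfl⟩ hxy
    simp only [hfactor.extend_apply] at hxy
    exact Subtype.ext ((hker x y).mpr hxy)⟩
  obtain ⟨π, hπ⟩ : ∃ π : L ≃ L, ∀ a : Set.range ψ', π a = f a := by
    cases finite_or_infinite L
    · exact Cardinal.extend_function_finite f ⟨Equiv.refl L⟩
    · exact Cardinal.extend_function_of_lt f
        ((Set.finite_range ψ').lt_aleph0.trans_le (Cardinal.aleph0_le_mk L)) ⟨Equiv.refl L⟩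
  exact ⟨π, funext fun x => (hπ ⟨ψ' x, x, rfl⟩).trans (hfactor.extend_apply id x)⟩

section Labeling

variable {S L : Type*}

/-- `φ ∈ G_P`. -/
def IsLabeling (P : Setoid S) (φ : S → L) : Prop :=
  ∀ x y, φ x = φ y ↔ P.r x y

variable {P : Setoid S} {φ : S → L}

theorem IsLabeling.ker_eq (h : IsLabeling P φ) : Setoid.ker φ = P :=
  Setoid.ext h

theorem IsLabeling.comp {M : Type*} {f : L → M} (h : IsLabeling P φ) (hf : Injective f) :
    IsLabeling P (f ∘ φ) :=
  fun x y => hf.eq_iff.trans (h x y)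

end Labeling

section NaturalCost

variable {S : Type*} (L : Type*) [Fintype S] [DecidableEq L]

def costValues (P Q : Setoid S) : Set ℝ :=
  {e | ∃ φ ψ : S → L, IsLabeling P φ ∧ IsLabeling Q ψ ∧ e = hammingDist φ ψ / Fintype.card S}

noncomputable def naturalCost (P Q : Setoid S) : ℝ :=
  sInf (costValues L P Q)

variable {L} {P Q R : Setoid S}

theorem nonneg_of_mem_costValues {e : ℝ} (he : e ∈ costValues L P Q) : 0 ≤ e := by
  obtain ⟨φ, ψ, -, -, rfl⟩ := he
  positivity

theorem costValues_finite : (costValues L P Q).Finite := by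
  refine ((Set.finite_Iic (Fintype.card S)).image
    fun k : ℕ => (k : ℝ) / Fintype.card S).subset ?_
  rintro _ ⟨φ, ψ, -, -, rfl⟩
  exact ⟨_, hammingDist_le_card_fintype, rfl⟩

theorem naturalCost_nonneg : 0 ≤ naturalCost L P Q :=
  Real.sInf_nonneg fun _ => nonneg_of_mem_costValues

theorem naturalCost_le {φ ψ : S → L} (hφ : IsLabeling P φ) (hψ : IsLabeling Q ψ) :
    naturalCost L P Q ≤ hammingDist φ ψ / Fintype.card S :=
  csInf_le ⟨0, fun _ => nonneg_of_mem_costValues⟩ ⟨φ, ψ, hφ, hψ, rfl⟩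

theorem naturalCost_mem_costValues (hP : ∃ φ : S → L, IsLabeling P φ)
    (hQ : ∃ ψ : S → L, IsLabeling Q ψ) : naturalCost L P Q ∈ costValues L P Q := by
  obtain ⟨φ, hφ⟩ := hP
  obtain ⟨ψ, hψ⟩ := hQ
  exact Set.Nonempty.csInf_mem ⟨_, φ, ψ, hφ, hψ, rfl⟩ costValues_finite

theorem naturalCost_self (hP : ∃ φ : S → L, IsLabeling P φ) : naturalCost L P P = 0 := by
  obtain ⟨φ, hφ⟩ := hP
  refine le_antisymm ?_ naturalCost_nonneg
  simpa using naturalCost_le hφ hφ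

theorem naturalCost_triangle (hP : ∃ φ : S → L, IsLabeling P φ)
    (hQ : ∃ ψ : S → L, IsLabeling Q ψ) (hR : ∃ χ : S → L, IsLabeling R χ) :
    naturalCost L P R ≤ naturalCost L P Q + naturalCost L Q R := by
  obtain ⟨φ, ψ, hφ, hψ, hPQ⟩ := naturalCost_mem_costValues hP hQ
  obtain ⟨ψ', χ, hψ', hχ, hQR⟩ := naturalCost_mem_costValues hQ hR
  obtain ⟨π, rfl⟩ := Setoid.exists_perm_comp_eq_of_ker_eq (hψ'.ker_eq.trans hψ.ker_eq.symm)
  have hrelabel : hammingDist (π ∘ ψ') (π ∘ χ) = hammingDist ψ' χ :=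
    hammingDist_comp (fun _ => π) fun _ => π.injective
  calc naturalCost L P R ≤ hammingDist φ (π ∘ χ) / Fintype.card S :=
        naturalCost_le hφ (hχ.comp π.injective)
    _ ≤ (hammingDist φ (π ∘ ψ') + hammingDist (π ∘ ψ') (π ∘ χ) : ℕ) / Fintype.card S := by
        gcongr
        exact hammingDist_triangle _ _ _
    _ = naturalCost L P Q + naturalCost L Q R := by
        rw [hPQ, hQR, hrelabel, Nat.cast_add, add_div]

theorem eq_of_naturalCost_eq_zero (hP : ∃ φ : S → L, IsLabeling P φ)
    (hQ : ∃ ψ : S → L, IsLabeling Q ψ) (h : naturalCost L P Q = 0) : P = Q := by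
  obtain ⟨φ, ψ, hφ, hψ, hPQ⟩ := naturalCost_mem_costValues hP hQ
  rw [h, eq_comm, div_eq_zero_iff, Nat.cast_eq_zero, Nat.cast_eq_zero, hammingDist_eq_zero,
    Fintype.card_eq_zero_iff] at hPQ
  rcases hPQ with rfl | hS
  · exact hφ.ker_eq.symm.trans hψ.ker_eq
  · exact Setoid.ext fun x => hS.elim x

end NaturalCost

theorem natural_cost_pseudometric_general {S L : Type*} [Fintype S] [DecidableEq L]
    (P Q R : Setoid S)
    (hP : ∃ φ : S → L, ∀ x y : S, φ x = φ y ↔ P.r x y)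
    (hQ : ∃ φ : S → L, ∀ x y : S, φ x = φ y ↔ Q.r x y)
    (hR : ∃ φ : S → L, ∀ x y : S, φ x = φ y ↔ R.r x y)
    (c : Setoid S → Setoid S → ℝ)
    (hc : ∀ P' Q' : Setoid S, c P' Q' = sInf {e : ℝ | ∃ φ ψ : S → L,
        (∀ x y : S, φ x = φ y ↔ P'.r x y) ∧ (∀ x y : S, ψ x = ψ y ↔ Q'.r x y) ∧
        e = ((Finset.univ.filter (fun x => φ x ≠ ψ x)).card : ℝ) / (Fintype.card S : ℝ)}) :
    c P P = 0 ∧ c P R ≤ c P Q + c Q R ∧ (c P Q = 0 → P = Q) := by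
  obtain rfl : c = naturalCost L := funext₂ hc
  exact ⟨naturalCost_self hP, naturalCost_triangle hP hQ hR, eq_of_naturalCost_eq_zero hP hQ⟩

/-- The natural partition cost function vanishes on the diagonal and satisfies
the triangle inequality (hence it is a pseudometric on partitions, represented
as setoids on `S` admitting a labeling with labels in `L`); moreover
`c_S(P, Q) = 0` implies `P = Q`. -/
theorem natural_cost_pseudometric {S L : Type*} [Fintype S] [Nonempty S] [DecidableEq L]
    (P Q R : Setoid S)
    (hP : ∃ φ : S → L, ∀ x y : S, φ x = φ y ↔ P.r x y)
    (hQ : ∃ φ : S → L, ∀ x y : S, φ x = φ y ↔ Q.r x y)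
    (hR : ∃ φ : S → L, ∀ x y : S, φ x = φ y ↔ R.r x y)
    (c : Setoid S → Setoid S → ℝ)
    (hc : ∀ P' Q' : Setoid S, c P' Q' = sInf {e : ℝ | ∃ φ ψ : S → L,
        (∀ x y : S, φ x = φ y ↔ P'.r x y) ∧ (∀ x y : S, ψ x = ψ y ↔ Q'.r x y) ∧
        e = ((Finset.univ.filter (fun x => φ x ≠ ψ x)).card : ℝ) / (Fintype.card S : ℝ)}) :
    c P P = 0 ∧ c P R ≤ c P Q + c Q R ∧ (c P Q = 0 → P = Q) :=
  natural_cost_pseudometric_general P Q R hP hQ hR c hc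
end

section
/- Let r₁,…,r_N be independent nonnegative random variables in m groups of sizes N₁,…,N_m, with group-i variables i.i.d. having finite (k+2)-th moments. For granulometric moments of the union of scaled disjoint grains I = ∪_i ∪_j (r_{ij} A_i + x_{ij}) with unit-area convex primitives, the k-th pattern-spectrum moment satisfies μ^{(k)}(I, B) = (Σ_i Σ_j μ^{(k)}(A_i, B) r_{ij}^{k+2}) / (Σ_i Σ_j r_{ij}^{2}), i.e., μ^{(k)}(I,B) = u/v with u, v as in (34)–(35). -/
/-!
The maps `x ↦ r • x + v` are affine equivalences, and opening is equivariant under affine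
equivalences acting on the image and, through their linear part, on the structuring element.
Hence the opening of a grain `r • A + v` by `t • B` is a translate of `r • (A ∘ (t / r) • B)`,
of area `r ^ 2 * area (A ∘ (t / r) • B)`, and the substitution `t = r s` turns its moment
integral into `r ^ (k + 2)` times that of `A`.

A translate of the convex set `t • B` is connected, so it cannot meet two disjoint closed grains
while staying inside their union. The opening of `I` is therefore the disjoint union of the
openings of the grains, and both `area I` and the moment integral of `I` split as sums over
the grains.
-/

open MeasureTheory Set Filter Function
open scoped Pointwise

/-- The morphological opening `I ∘ B = ⋃ {B + x : B + x ⊆ I}`. -/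
def mopening (I B : Set (ℝ × ℝ)) : Set (ℝ × ℝ) :=
  ⋃ x ∈ {x : ℝ × ℝ | (fun b => x + b) '' B ⊆ I}, (fun b => x + b) '' B

/-- The `k`-th pattern-spectrum (granulometric) moment of `I` relative to the
structuring element `B`:
`μ^{(k)}(I,B) = (k / area I) ∫_0^∞ t^{k−1} area(I ∘ tB) dt`
(equivalently `∫ t^k dΦ_I(t)` by integration by parts). -/
noncomputable def gmoment (I B : Set (ℝ × ℝ)) (k : ℕ) : ℝ :=
  ((k : ℝ) / (volume I).toReal) *
    ∫ t in Set.Ioi (0 : ℝ), t ^ (k - 1) * (volume (mopening I (t • B))).toReal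

theorem IsPreconnected.subset_of_subset_iUnion {X ι : Type*} [TopologicalSpace X] [Finite ι]
    {s : Set X} {G : ι → Set X} (hs : IsPreconnected s) (hG : ∀ i, IsClosed (G i))
    (hdisj : Pairwise (Disjoint on G)) (hsub : s ⊆ ⋃ i, G i) {i : ι} (hi : (s ∩ G i).Nonempty) :
    s ⊆ G i := by
  set R := ⋃ j ∈ {j | j ≠ i}, G j
  have hR : IsClosed R := (toFinite _).isClosed_biUnion fun j _ => hG j
  have hdisjR : Disjoint (G i) R := disjoint_iUnion₂_right.2 fun _ hj => hdisj (Ne.symm hj)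
  have hcover : s ⊆ G i ∪ R := fun x hx => by
    obtain ⟨j, hj⟩ := mem_iUnion.1 (hsub hx)
    by_cases hji : j = i
    · exact Or.inl (hji ▸ hj)
    · exact Or.inr (mem_biUnion hji hj)
  refine (isPreconnected_iff_subset_of_disjoint_closed.1 hs _ _ (hG i) hR hcover
    (by rw [hdisjR.inter_eq, inter_empty])).resolve_right fun hsR => ?_
  obtain ⟨x, hxs, hxi⟩ := hi
  exact hdisjR.notMem_of_mem_left hxi (hsR hxs)

theorem mem_mopening {I B : Set (ℝ × ℝ)} {y : ℝ × ℝ} :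
    y ∈ mopening I B ↔ ∃ x, (fun b => x + b) '' B ⊆ I ∧ y ∈ (fun b => x + b) '' B := by
  simp only [mopening, mem_iUnion, exists_prop, mem_ofPred_eq]

theorem mopening_subset (I B : Set (ℝ × ℝ)) : mopening I B ⊆ I := fun _ hy =>
  have ⟨_, hx, hy⟩ := mem_mopening.1 hy
  hx hy

theorem mopening_mono {I J : Set (ℝ × ℝ)} (h : I ⊆ J) (B : Set (ℝ × ℝ)) :
    mopening I B ⊆ mopening J B := fun _ hy =>
  have ⟨x, hx, hy⟩ := mem_mopening.1 hy
  mem_mopening.2 ⟨x, hx.trans h, hy⟩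

theorem mopening_add_subset (I C D : Set (ℝ × ℝ)) : mopening I (C + D) ⊆ mopening I C := by
  intro y hy
  obtain ⟨x, hx, _, ⟨c, hc, d, hd, rfl⟩, rfl⟩ := mem_mopening.1 hy
  refine mem_mopening.2 ⟨x + d, ?_, c, hc, by dsimp only; abel⟩
  rintro _ ⟨c', hc', rfl⟩
  exact hx ⟨c' + d, add_mem_add hc' hd, by dsimp only; abel⟩

theorem mopening_smul_subset_of_le {I B : Set (ℝ × ℝ)} (hB : Convex ℝ B) {s t : ℝ}
    (hs : 0 ≤ s) (hst : s ≤ t) : mopening I (t • B) ⊆ mopening I (s • B) := by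
  have hsplit := hB.add_smul hs (sub_nonneg.2 hst)
  rw [add_sub_cancel] at hsplit
  rw [hsplit]
  exact mopening_add_subset I _ _

theorem image_mopening (f : (ℝ × ℝ) ≃ᵃ[ℝ] (ℝ × ℝ)) (I B : Set (ℝ × ℝ)) :
    f '' mopening I B = mopening (f '' I) (f.linear '' B) := by
  have image_translate : ∀ x,
      f '' ((fun b => x + b) '' B) = (fun b => f x + b) '' (f.linear '' B) := fun x => by
    simp only [image_image]
    refine image_congr fun b _ => ?_
    rw [add_comm x b, ← vadd_eq_add, f.map_vadd, vadd_eq_add, add_comm]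
  ext y
  simp only [mopening, image_iUnion₂, mem_iUnion, exists_prop, mem_ofPred_eq]
  rw [Iff.comm, f.surjective.exists]
  simp only [← image_translate, image_subset_image_iff f.injective]

theorem mopening_image_add_left (v : ℝ × ℝ) (I B : Set (ℝ × ℝ)) :
    mopening ((fun b => v + b) '' I) B = (fun b => v + b) '' mopening I B := by
  have := (image_mopening (AffineEquiv.constVAdd ℝ (ℝ × ℝ) v) I B).symm
  rwa [AffineEquiv.linear_constVAdd, show ⇑(LinearEquiv.refl ℝ (ℝ × ℝ)) '' B = B from image_id B]
    at this

theorem mopening_smul_smul {r : ℝ} (hr : r ≠ 0) (I B : Set (ℝ × ℝ)) :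
    mopening (r • I) (r • B) = r • mopening I B := by
  simp only [← image_smul]
  exact (image_mopening (LinearEquiv.smulOfNeZero ℝ (ℝ × ℝ) r hr).toAffineEquiv I B).symm

theorem mopening_eq_add (I C : Set (ℝ × ℝ)) :
    mopening I C = {x | (fun b => x + b) '' C ⊆ I} + C :=
  iUnion_add_left_image

theorem isClosed_mopening {I C : Set (ℝ × ℝ)} (hI : IsClosed I) (hC : IsCompact C) :
    IsClosed (mopening I C) := by
  have hfit : {x | (fun b => x + b) '' C ⊆ I} = ⋂ c ∈ C, (fun x => x + c) ⁻¹' I := by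
    ext x
    simp only [mem_ofPred_eq, image_subset_iff, mem_iInter, mem_preimage]
    rfl
  rw [mopening_eq_add, hfit]
  exact (isClosed_biInter fun c _ => hI.preimage (continuous_add_const c)).add_right_of_isCompact hC

theorem mopening_iUnion {ι : Type*} [Finite ι] {G : ι → Set (ℝ × ℝ)}
    (hG : ∀ i, IsClosed (G i)) (hdisj : Pairwise (Disjoint on G)) {C : Set (ℝ × ℝ)}
    (hC : Convex ℝ C) (hCne : C.Nonempty) :
    mopening (⋃ i, G i) C = ⋃ i, mopening (G i) C := by
  refine Subset.antisymm (fun y hy => ?_)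
    (iUnion_subset fun i => mopening_mono (subset_iUnion G i) C)
  obtain ⟨x, hx, hy⟩ := mem_mopening.1 hy
  obtain ⟨c, hc⟩ := hCne
  obtain ⟨i, hi⟩ := mem_iUnion.1 (hx ⟨c, hc, rfl⟩)
  have hfit := (hC.translate x).isPreconnected.subset_of_subset_iUnion hG hdisj hx
    ⟨_, ⟨c, hc, rfl⟩, hi⟩
  exact mem_iUnion.2 ⟨i, mem_mopening.2 ⟨x, hfit, hy⟩⟩

theorem eventually_mopening_smul_eq_empty {I B : Set (ℝ × ℝ)} (hI : Bornology.IsBounded I)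
    (hB : B.Nontrivial) : ∀ᶠ t : ℝ in atTop, mopening I (t • B) = ∅ := by
  obtain ⟨b₁, hb₁, b₂, hb₂, hne⟩ := hB
  have hd : 0 < dist b₁ b₂ := dist_pos.2 hne
  filter_upwards [eventually_gt_atTop (Metric.diam I / dist b₁ b₂)] with t ht
  refine eq_empty_of_forall_notMem fun y hy => ?_
  obtain ⟨x, hx, -⟩ := mem_mopening.1 hy
  have ht0 : 0 < t := (div_nonneg Metric.diam_nonneg hd.le).trans_lt ht
  have hdiam := Metric.dist_le_diam_of_mem hI (hx ⟨t • b₁, smul_mem_smul_set hb₁, rfl⟩)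
    (hx ⟨t • b₂, smul_mem_smul_set hb₂, rfl⟩)
  rw [dist_add_left, dist_smul₀, Real.norm_eq_abs, abs_of_pos ht0] at hdiam
  rw [div_lt_iff₀ hd] at ht
  linarith

theorem integral_Ioi_pow_mul_comp_div (f : ℝ → ℝ) {r : ℝ} (hr : 0 < r) (n : ℕ) :
    ∫ t in Ioi 0, t ^ n * f (t / r) = r ^ (n + 1) * ∫ t in Ioi 0, t ^ n * f t := by
  have hsubst := integral_comp_mul_left_Ioi (fun s => (r * s) ^ n * f s) 0 (inv_pos.2 hr)
  simp only [mul_zero, inv_inv, smul_eq_mul, ← div_eq_inv_mul, mul_div_cancel₀ _ hr.ne'] at hsubst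
  rw [hsubst]
  simp only [mul_pow, mul_assoc, integral_const_mul]
  ring

theorem measureReal_image_add_smul (v : ℝ × ℝ) (r : ℝ) (S : Set (ℝ × ℝ)) :
    volume.real ((fun b => v + b) '' (r • S)) = r ^ 2 * volume.real S := by
  simp [Measure.real, Measure.addHaar_smul, sq_nonneg]

theorem integrableOn_pow_mul_measureReal_mopening {A B : Set (ℝ × ℝ)} (hA : IsCompact A)
    (hB : Convex ℝ B) (hBnt : B.Nontrivial) (n : ℕ) :
    IntegrableOn (fun t => t ^ n * volume.real (mopening A (t • B))) (Ioi 0) := by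
  obtain ⟨T, hT⟩ := eventually_atTop.1 (eventually_mopening_smul_eq_empty hA.isBounded hBnt)
  have hanti : AntitoneOn (fun t => volume.real (mopening A (t • B))) (Icc 0 T) :=
    fun s hs _ _ hst => measureReal_mono (mopening_smul_subset_of_le hB hs.1 hst)
      (measure_ne_top_of_subset (mopening_subset _ _) hA.measure_lt_top.ne)
  have hnear : IntegrableOn (fun t => t ^ n * volume.real (mopening A (t • B))) (Icc 0 T) :=
    (hanti.integrableOn_isCompact isCompact_Icc).continuousOn_mul
      (continuous_pow n).continuousOn isCompact_Icc
  have hfar : IntegrableOn (fun t => t ^ n * volume.real (mopening A (t • B))) (Ioi T) :=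
    integrableOn_zero.congr_fun (fun t ht => by simp [hT t (le_of_lt ht)]) measurableSet_Ioi
  exact (hnear.union hfar).mono_set fun t ht => (le_or_gt t T).imp (fun h => ⟨le_of_lt ht, h⟩) id

noncomputable def unnormalizedGmoment (I B : Set (ℝ × ℝ)) (k : ℕ) : ℝ :=
  k * ∫ t in Ioi 0, t ^ (k - 1) * volume.real (mopening I (t • B))

theorem gmoment_eq_div (I B : Set (ℝ × ℝ)) (k : ℕ) :
    gmoment I B k = unnormalizedGmoment I B k / volume.real I :=
  div_mul_eq_mul_div _ _ _

theorem unnormalizedGmoment_iUnion {ι : Type*} [Fintype ι] {G : ι → Set (ℝ × ℝ)}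
    (hG : ∀ i, IsCompact (G i)) (hdisj : Pairwise (Disjoint on G)) {B : Set (ℝ × ℝ)}
    (hBcpt : IsCompact B) (hBcvx : Convex ℝ B) (hBnt : B.Nontrivial) (k : ℕ) :
    unnormalizedGmoment (⋃ i, G i) B k = ∑ i, unnormalizedGmoment (G i) B k := by
  have hsplit : ∀ t : ℝ, volume.real (mopening (⋃ i, G i) (t • B))
      = ∑ i, volume.real (mopening (G i) (t • B)) := fun t => by
    rw [mopening_iUnion (fun i => (hG i).isClosed) hdisj (hBcvx.smul t) hBnt.nonempty.smul_set]
    exact measureReal_iUnion_fintype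
      (fun i j hij => (hdisj hij).mono (mopening_subset _ _) (mopening_subset _ _))
      (fun i => (isClosed_mopening (hG i).isClosed (hBcpt.smul t)).measurableSet)
      (fun i => measure_ne_top_of_subset (mopening_subset _ _) (hG i).measure_lt_top.ne)
  simp only [unnormalizedGmoment, hsplit, Finset.mul_sum]
  rw [integral_finsetSum _ fun i _ =>
    integrableOn_pow_mul_measureReal_mopening (hG i) hBcvx hBnt _, Finset.mul_sum]

theorem unnormalizedGmoment_image_add_smul (v : ℝ × ℝ) {r : ℝ} (hr : 0 < r)
    (A B : Set (ℝ × ℝ)) (k : ℕ) :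
    unnormalizedGmoment ((fun b => v + b) '' (r • A)) B k
      = r ^ (k + 2) * unnormalizedGmoment A B k := by
  have harea : ∀ t : ℝ, volume.real (mopening ((fun b => v + b) '' (r • A)) (t • B))
      = r ^ 2 * volume.real (mopening A ((t / r) • B)) := fun t => by
    rw [show t • B = r • ((t / r) • B) by rw [smul_smul, mul_div_cancel₀ _ hr.ne'],
      mopening_image_add_left, mopening_smul_smul hr.ne', measureReal_image_add_smul]
  rcases k with _ | n
  · simp [unnormalizedGmoment]
  · simp only [unnormalizedGmoment, harea, mul_left_comm _ (r ^ 2), integral_const_mul,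
      Nat.add_sub_cancel,
      integral_Ioi_pow_mul_comp_div (fun s => volume.real (mopening A (s • B))) hr]
    ring

theorem gmoment_of_disjoint_union_of_grains_general
    {m : ℕ} (A : Fin m → Set (ℝ × ℝ)) (B : Set (ℝ × ℝ))
    (hAcpt : ∀ i, IsCompact (A i))
    (hA1 : ∀ i, volume (A i) = 1)
    (hBcpt : IsCompact B) (hBcvx : Convex ℝ B) (hBnt : B.Nontrivial)
    (N : Fin m → ℕ) (r : (i : Fin m) → Fin (N i) → ℝ) (hr : ∀ i j, 0 < r i j)
    (xc : (i : Fin m) → Fin (N i) → ℝ × ℝ)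
    (grain : (i : Fin m) → Fin (N i) → Set (ℝ × ℝ))
    (hgrain : ∀ i j, grain i j = (fun b => xc i j + b) '' (r i j • A i))
    (hdisj : ∀ (i : Fin m) (j : Fin (N i)) (i' : Fin m) (j' : Fin (N i')),
        (⟨i, j⟩ : Σ i, Fin (N i)) ≠ ⟨i', j'⟩ → Disjoint (grain i j) (grain i' j'))
    (I : Set (ℝ × ℝ)) (hI : I = ⋃ i, ⋃ j, grain i j)
    (k : ℕ) :
    gmoment I B k
      = (∑ i, ∑ j, gmoment (A i) B k * r i j ^ (k + 2)) / (∑ i, ∑ j, r i j ^ 2) := by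
  have hcpt : ∀ p : Σ i, Fin (N i), IsCompact (grain p.1 p.2) := fun ⟨i, j⟩ => by
    rw [hgrain]
    exact ((hAcpt i).smul (r i j)).image (continuous_const_add (xc i j))
  have hpair : Pairwise (Disjoint on fun p : Σ i, Fin (N i) => grain p.1 p.2) :=
    fun p q hpq => hdisj _ _ _ _ hpq
  have harea : ∀ i j, volume.real (grain i j) = r i j ^ 2 := fun i j => by
    rw [hgrain, measureReal_image_add_smul, measureReal_def, hA1, ENNReal.toReal_one, mul_one]
  have hmoment : ∀ i j,
      unnormalizedGmoment (grain i j) B k = gmoment (A i) B k * r i j ^ (k + 2) := fun i j => by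
    rw [hgrain, unnormalizedGmoment_image_add_smul _ (hr i j), gmoment_eq_div, measureReal_def,
      hA1, ENNReal.toReal_one, div_one, mul_comm]
  rw [gmoment_eq_div, hI, ← iUnion_sigma (fun p : Σ i, Fin (N i) => grain p.1 p.2),
    unnormalizedGmoment_iUnion hcpt hpair hBcpt hBcvx hBnt,
    measureReal_iUnion_fintype hpair (fun p => (hcpt p).measurableSet)
      (fun p => (hcpt p).measure_lt_top.ne),
    Fintype.sum_sigma, Fintype.sum_sigma]
  simp only [hmoment, harea]

/-- Granulometric moments of a disjoint union of scaled, translated convex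
unit-area primitives combine as an area-weighted ratio:
`μ^{(k)}(I,B) = (∑_{i,j} μ^{(k)}(A_i,B) r_{ij}^{k+2}) / (∑_{i,j} r_{ij}^2)`. -/
theorem gmoment_of_disjoint_union_of_grains
    {m : ℕ} (A : Fin m → Set (ℝ × ℝ)) (B : Set (ℝ × ℝ))
    (hAcpt : ∀ i, IsCompact (A i)) (hAcvx : ∀ i, Convex ℝ (A i))
    (hA1 : ∀ i, volume (A i) = 1)
    (hBcpt : IsCompact B) (hBcvx : Convex ℝ B) (hBnt : B.Nontrivial)
    (N : Fin m → ℕ) (r : (i : Fin m) → Fin (N i) → ℝ) (hr : ∀ i j, 0 < r i j)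
    (xc : (i : Fin m) → Fin (N i) → ℝ × ℝ)
    (grain : (i : Fin m) → Fin (N i) → Set (ℝ × ℝ))
    (hgrain : ∀ i j, grain i j = (fun b => xc i j + b) '' (r i j • A i))
    (hdisj : ∀ (i : Fin m) (j : Fin (N i)) (i' : Fin m) (j' : Fin (N i')),
        (⟨i, j⟩ : Σ i, Fin (N i)) ≠ ⟨i', j'⟩ → Disjoint (grain i j) (grain i' j'))
    (I : Set (ℝ × ℝ)) (hI : I = ⋃ i, ⋃ j, grain i j)
    (k : ℕ) (hk : 1 ≤ k) :
    gmoment I B k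
      = (∑ i, ∑ j, gmoment (A i) B k * r i j ^ (k + 2)) / (∑ i, ∑ j, r i j ^ 2) :=
  gmoment_of_disjoint_union_of_grains_general A B hAcpt hA1 hBcpt hBcvx hBnt N r hr xc grain hgrain
    hdisj I hI k
end
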